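/- arXiv:2601.10357 — 2 statements merged into one kernel-verified Lean document; each statement's English description precedes it below -/
import Mathlib

section
/- Let p : Ω → (δ, 1−δ)^M and q : Ω → (δ, 1−δ)^M be measurable functions with values in the probability simplex (each having coordinates summing to 1), where 0 < δ < 1/2. Then |E[Σ_{m=1}^M p_m log(q_m / p_m)]| ≤ ((1−δ)/(2δ²)) · E[Σ_{m=1}^M (q_m − p_m)²]. -/
/-!
Write `D(a, b) = b - a - a log (b / a) ≥ 0`. Since `∑ p = ∑ q`, the cross-entropy term
`∑ p_m log (q_m / p_m)` equals `-∑ D(p_m, q_m)`, and `D(a, b)` is at most `(b - a)² / (2 min a b)`: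
for `a ≤ b` this is the Padé bound `log (1 + x) ≥ 2x / (x + 2)`, for `b ≤ a` it is
`sinh (log t) ≤ log t` at `t = b / a ≤ 1`. With all coordinates above `δ` the pointwise bound is
`(2δ)⁻¹ ∑ (q_m - p_m)²`, and `(2δ)⁻¹ ≤ (1 - δ) / (2δ²)` because `δ ≤ 1 - δ`.
-/

open MeasureTheory Real

lemma mul_log_div_le_sub {a b : ℝ} (ha : 0 < a) (hb : 0 < b) : a * log (b / a) ≤ b - a := by
  calc a * log (b / a) ≤ a * (b / a - 1) := by
        gcongr; exact log_le_sub_one_of_pos (div_pos hb ha)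
    _ = b - a := by field_simp

lemma sub_sub_mul_log_div_le_of_le {a b : ℝ} (ha : 0 < a) (hab : a ≤ b) :
    b - a - a * log (b / a) ≤ (b - a) ^ 2 / (a + b) := by
  have hpade := le_log_one_add_of_nonneg (div_nonneg (sub_nonneg.2 hab) ha.le)
  have h1 : 1 + (b - a) / a = b / a := by field_simp; ring
  have h2 : 2 * ((b - a) / a) / ((b - a) / a + 2) = 2 * (b - a) / (a + b) := by
    field_simp; ring
  rw [h1, h2] at hpade
  have hab0 : 0 < a + b := by linarith
  calc b - a - a * log (b / a) ≤ b - a - a * (2 * (b - a) / (a + b)) := by gcongr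
    _ = (b - a) ^ 2 / (a + b) := by field_simp; ring

lemma sub_sub_mul_log_div_le_of_ge {a b : ℝ} (ha : 0 < a) (hb : 0 < b) (hba : b ≤ a) :
    b - a - a * log (b / a) ≤ (b - a) ^ 2 / (2 * b) := by
  have hlog : log (b / a) ≤ 0 := log_nonpos (div_nonneg hb.le ha.le) ((div_le_one ha).2 hba)
  have hsinh := sinh_le_self_iff.2 hlog
  rw [sinh_log (div_pos hb ha)] at hsinh
  calc b - a - a * log (b / a) ≤ b - a - a * ((b / a - (b / a)⁻¹) / 2) := by gcongr
    _ = (b - a) ^ 2 / (2 * b) := by field_simp; ring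

lemma sub_sub_mul_log_div_le {a b : ℝ} (ha : 0 < a) (hb : 0 < b) :
    b - a - a * log (b / a) ≤ (b - a) ^ 2 / (2 * min a b) := by
  rcases le_total a b with hab | hba
  · rw [min_eq_left hab]
    exact (sub_sub_mul_log_div_le_of_le ha hab).trans (by gcongr; linarith)
  · rw [min_eq_right hba]
    exact sub_sub_mul_log_div_le_of_ge ha hb hba

lemma abs_sum_mul_log_div_le {ι : Type*} [Fintype ι] {δ : ℝ} (hδ : 0 < δ) {p q : ι → ℝ}
    (hp : ∀ i, δ ≤ p i) (hq : ∀ i, δ ≤ q i) (hpq : ∑ i, p i = ∑ i, q i) :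
    |∑ i, p i * log (q i / p i)| ≤ (2 * δ)⁻¹ * ∑ i, (q i - p i) ^ 2 := by
  have hp0 i : 0 < p i := hδ.trans_le (hp i)
  have hq0 i : 0 < q i := hδ.trans_le (hq i)
  have hsub : ∑ i, (q i - p i) = 0 := by rw [Finset.sum_sub_distrib, hpq, sub_self]
  have hnonpos : ∑ i, p i * log (q i / p i) ≤ 0 :=
    hsub ▸ Finset.sum_le_sum fun i _ => mul_log_div_le_sub (hp0 i) (hq0 i)
  have hdiv : ∑ i, (q i - p i - p i * log (q i / p i)) ≤ ∑ i, (q i - p i) ^ 2 / (2 * δ) :=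
    Finset.sum_le_sum fun i _ => (sub_sub_mul_log_div_le (hp0 i) (hq0 i)).trans <|
      by gcongr; exact le_min (hp i) (hq i)
  rw [Finset.sum_sub_distrib, hsub, ← Finset.sum_div] at hdiv
  rw [abs_of_nonpos hnonpos, ← div_eq_inv_mul]
  linarith

lemma abs_integral_le_mul_integral_of_abs_le {Ω : Type*} [MeasurableSpace Ω] {μ : Measure Ω}
    {f g : Ω → ℝ} {c : ℝ} (hg : Integrable g μ) (hfg : ∀ ω, |f ω| ≤ c * g ω) :
    |∫ ω, f ω ∂μ| ≤ c * ∫ ω, g ω ∂μ :=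
  calc |∫ ω, f ω ∂μ| ≤ ∫ ω, |f ω| ∂μ := abs_integral_le_integral_abs
    _ ≤ ∫ ω, c * g ω ∂μ :=
      integral_mono_of_nonneg (.of_forall fun _ => abs_nonneg _) (hg.const_mul c) (.of_forall hfg)
    _ = c * ∫ ω, g ω ∂μ := integral_const_mul c _

/-- Curvature bound for cross-entropy.  For simplex-valued
functions `p, q` with coordinates in `(δ, 1-δ)`,
`|E[Σ_m p_m log(q_m / p_m)]| ≤ ((1-δ)/(2δ²)) E[Σ_m (q_m - p_m)²]`. -/
theorem stmt3 {Ω : Type*} [MeasureSpace Ω]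
    [IsProbabilityMeasure (volume : Measure Ω)]
    {M : ℕ} {δ : ℝ} (hδ0 : 0 < δ) (hδ1 : δ < 1 / 2)
    (p q : Ω → Fin M → ℝ)
    (hpmeas : Measurable p) (hqmeas : Measurable q)
    (hpmem : ∀ ω m, p ω m ∈ Set.Ioo δ (1 - δ))
    (hqmem : ∀ ω m, q ω m ∈ Set.Ioo δ (1 - δ))
    (hpsum : ∀ ω, ∑ m, p ω m = 1)
    (hqsum : ∀ ω, ∑ m, q ω m = 1) :
    |∫ ω, ∑ m, p ω m * Real.log (q ω m / p ω m)|
      ≤ (1 - δ) / (2 * δ ^ 2) * ∫ ω, ∑ m, (q ω m - p ω m) ^ 2 := by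
  have hsq_le_one ω m : (q ω m - p ω m) ^ 2 ≤ 1 := by
    obtain ⟨hp₁, hp₂⟩ := hpmem ω m
    obtain ⟨hq₁, hq₂⟩ := hqmem ω m
    nlinarith
  have hint : Integrable fun ω => ∑ m, (q ω m - p ω m) ^ 2 :=
    integrable_finsetSum _ fun m _ =>
      .of_bound (by fun_prop) 1 (.of_forall fun ω => by
        rw [Real.norm_of_nonneg (sq_nonneg _)]; exact hsq_le_one ω m)
  have hbound := abs_integral_le_mul_integral_of_abs_le hint fun ω =>
    abs_sum_mul_log_div_le hδ0 (fun m => (hpmem ω m).1.le) (fun m => (hqmem ω m).1.le)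
      ((hpsum ω).trans (hqsum ω).symm)
  have hconst : (2 * δ)⁻¹ ≤ (1 - δ) / (2 * δ ^ 2) := by
    rw [inv_eq_one_div, div_le_div_iff₀ (by positivity) (by positivity)]
    nlinarith
  exact hbound.trans (by gcongr)
end

section
/- Let B ∈ ℝ^{p×d*} and Bd ∈ ℝ^{p×d} (d ≥ d*) both have orthonormal columns, and suppose span(Bd') ⊆ span(Bd) for the first d* columns Bd' of Bd. Then for any x ∈ ℝ^p, with O = Bᵀ Bd we have ‖O Bdᵀ x − Bᵀ x‖₂ ≤ ‖P_B − P_{Bd'}‖₂ · ‖x‖₂, where P_A = A Aᵀ denotes the orthogonal projection onto the column space of A. -/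
/-!
Since `Bd'` consists of columns of `Bd`, the projection `P_{Bd'}` annihilates the range of
`P_{Bd} - 1`, so `Bᵀ (P_{Bd} - 1) = Bᵀ P_B (P_{Bd} - 1) = Bᵀ (P_B - P_{Bd'}) (P_{Bd} - 1)`.
The left-hand side of the claim is this matrix applied to `x`, and both outer factors have
operator norm at most `1`: `Bᵀ` because `B` has orthonormal columns, `P_{Bd} - 1` because
it is minus an orthogonal projection.
-/

open Matrix
open scoped Matrix.Norms.L2Operator

namespace Matrix

section Algebra

variable {α : Type*} [Ring α] [StarRing α] {l m n : Type*} [Fintype m] [Fintype n]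
  [DecidableEq n]

theorem conjTranspose_mul_mul_sub_one_eq_zero [DecidableEq m] {A : Matrix m n α} (hA : Aᴴ * A = 1)
    (C : Matrix n l α) : (A * C)ᴴ * (A * Aᴴ - 1) = 0 := by
  rw [conjTranspose_mul, Matrix.mul_assoc, Matrix.mul_sub, Matrix.mul_one,
    ← Matrix.mul_assoc Aᴴ, hA, Matrix.one_mul, sub_self, Matrix.mul_zero]

theorem conjTranspose_mul_eq_mul_sub_mul {B : Matrix m n α} (hB : Bᴴ * B = 1)
    {P M : Matrix m m α} (hPM : P * M = 0) : Bᴴ * M = Bᴴ * (B * Bᴴ - P) * M := by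
  rw [Matrix.mul_assoc, Matrix.sub_mul, hPM, sub_zero, ← Matrix.mul_assoc, ← Matrix.mul_assoc,
    hB, Matrix.one_mul]

theorem isStarProjection_mul_conjTranspose_self {A : Matrix m n α} (hA : Aᴴ * A = 1) :
    IsStarProjection (A * Aᴴ) where
  isIdempotentElem := by
    rw [IsIdempotentElem, Matrix.mul_assoc, ← Matrix.mul_assoc Aᴴ, hA, Matrix.one_mul]
  isSelfAdjoint := by rw [IsSelfAdjoint, star_eq_conjTranspose, conjTranspose_mul,
    conjTranspose_conjTranspose]

end Algebra

section L2OpNorm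

variable {𝕜 : Type*} [RCLike 𝕜] {m n : Type*} [Fintype m] [Fintype n] [DecidableEq n]

theorem l2_opNorm_le_one_of_conjTranspose_mul_self_eq_one {A : Matrix m n 𝕜}
    (hA : Aᴴ * A = 1) : ‖A‖ ≤ 1 := by
  have hsq : ‖A‖ * ‖A‖ ≤ 1 := by
    rw [← l2_opNorm_conjTranspose_mul_self, hA]
    exact IsStarProjection.norm_le _ (IsStarProjection.one _)
  nlinarith [norm_nonneg A]

theorem l2_opNorm_mul_conjTranspose_self_sub_one_le_one [DecidableEq m] {A : Matrix m n 𝕜}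
    (hA : Aᴴ * A = 1) : ‖A * Aᴴ - 1‖ ≤ 1 := by
  rw [norm_sub_rev]
  exact IsStarProjection.norm_le _ (isStarProjection_mul_conjTranspose_self hA).one_sub

end L2OpNorm

end Matrix

/-- With `O = Bᵀ Bd`, for all `x`,
`‖O Bdᵀ x − Bᵀ x‖₂ ≤ ‖P_B − P_{Bd'}‖₂ ‖x‖₂`, where `Bd'` is the matrix of the
first `d*` columns of `Bd` and `P_A = A Aᵀ`.  Vector norms are Euclidean and
the matrix norm is the `ℓ²` operator (spectral) norm. -/
theorem stmt7 {p dstar d : ℕ} (hd : dstar ≤ d)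
    (B : Matrix (Fin p) (Fin dstar) ℝ) (Bd : Matrix (Fin p) (Fin d) ℝ)
    (hB : Bᵀ * B = 1) (hBd : Bdᵀ * Bd = 1)
    (Bd' : Matrix (Fin p) (Fin dstar) ℝ)
    (hBd' : Bd' = Bd.submatrix id (Fin.castLE hd))
    (x : EuclideanSpace ℝ (Fin p)) :
    ‖(WithLp.equiv 2 (Fin dstar → ℝ)).symm
        ((Bᵀ * Bd).mulVec (Bdᵀ.mulVec (WithLp.equiv 2 (Fin p → ℝ) x))
          - Bᵀ.mulVec (WithLp.equiv 2 (Fin p → ℝ) x))‖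
      ≤ ‖B * Bᵀ - Bd' * Bd'ᵀ‖ * ‖x‖ := by
  simp only [← conjTranspose_eq_transpose_of_trivial] at hB hBd ⊢
  have hcols : Bd' = Bd * (1 : Matrix (Fin d) (Fin d) ℝ).submatrix id (Fin.castLE hd) := by
    simpa [hBd'] using (mul_submatrix_one (Equiv.refl _) (Fin.castLE hd) Bd).symm
  have hfactor : Bᴴ * (Bd * Bdᴴ - 1) = Bᴴ * (B * Bᴴ - Bd' * Bd'ᴴ) * (Bd * Bdᴴ - 1) := by
    refine conjTranspose_mul_eq_mul_sub_mul hB ?_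
    rw [Matrix.mul_assoc, hcols, conjTranspose_mul_mul_sub_one_eq_zero hBd, Matrix.mul_zero]
  have hvec : (Bᴴ * Bd) *ᵥ (Bdᴴ *ᵥ x.ofLp) - Bᴴ *ᵥ x.ofLp
      = (Bᴴ * (B * Bᴴ - Bd' * Bd'ᴴ) * (Bd * Bdᴴ - 1)) *ᵥ x.ofLp := by
    rw [← hfactor, mulVec_mulVec, Matrix.mul_sub, Matrix.mul_one, ← Matrix.mul_assoc, sub_mulVec]
  rw [WithLp.equiv_apply, hvec]
  calc _ ≤ ‖Bᴴ * (B * Bᴴ - Bd' * Bd'ᴴ) * (Bd * Bdᴴ - 1)‖ * ‖x‖ := l2_opNorm_mulVec _ x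
    _ ≤ ‖Bᴴ‖ * ‖B * Bᴴ - Bd' * Bd'ᴴ‖ * ‖Bd * Bdᴴ - 1‖ * ‖x‖ := by
      gcongr
      exact (l2_opNorm_mul _ _).trans (by gcongr; exact l2_opNorm_mul _ _)
    _ ≤ 1 * ‖B * Bᴴ - Bd' * Bd'ᴴ‖ * 1 * ‖x‖ := by
      rw [l2_opNorm_conjTranspose]
      gcongr
      exacts [l2_opNorm_le_one_of_conjTranspose_mul_self_eq_one hB,
        l2_opNorm_mul_conjTranspose_self_sub_one_le_one hBd]
    _ = ‖B * Bᴴ - Bd' * Bd'ᴴ‖ * ‖x‖ := by ring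
end
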